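/- For an odd prime p, the automorphisms of G_p of the form b ↦ b, a ↦ b^{mp}a (m in Z/p) are inner automorphisms. -/

import Mathlib

set_option linter.unusedSectionVars false

def Gp (p : ℕ) : Type := ZMod (p ^ 2) × ZMod p

namespace Gp

variable {p : ℕ} [NeZero p]

/-- `(p+1)^a` in `ZMod (p^2)`, computed as `1 + p·a`. -/
def u (a : ZMod p) : ZMod (p ^ 2) := 1 + (p : ZMod (p ^ 2)) * (a.val : ZMod (p ^ 2))

lemma p_mul_p : (p : ZMod (p ^ 2)) * (p : ZMod (p ^ 2)) = 0 := by
  rw [← Nat.cast_mul, show p * p = p ^ 2 by ring, ZMod.natCast_self]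

lemma pmul_mod (x : ℕ) :
    (p : ZMod (p ^ 2)) * ((x % p : ℕ) : ZMod (p ^ 2)) = (p : ZMod (p ^ 2)) * x := by
  conv_rhs => rw [← Nat.div_add_mod x p]
  push_cast
  linear_combination (-(x / p : ℕ) : ZMod (p ^ 2)) * p_mul_p (p := p)

lemma u_add (a b : ZMod p) : u (a + b) = u a * u b := by
  unfold u
  rw [ZMod.val_add, pmul_mod]
  push_cast
  linear_combination (-(a.val : ZMod (p ^ 2)) * (b.val : ZMod (p ^ 2))) * p_mul_p (p := p)

lemma u_zero : u (0 : ZMod p) = 1 := by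
  unfold u
  rw [ZMod.val_zero]
  push_cast
  ring

private def gmul (x y : Gp p) : Gp p := (x.1 + u x.2 * y.1, x.2 + y.2)

private def ginv (x : Gp p) : Gp p := (-(u (-x.2) * x.1), -x.2)

private def gone : Gp p := ((0 : ZMod (p ^ 2)), (0 : ZMod p))

instance : Group (Gp p) where
  mul := gmul
  one := gone
  inv := ginv
  mul_assoc x y z := by
    show gmul (gmul x y) z = gmul x (gmul y z)
    unfold gmul
    refine Prod.ext ?_ ?_ <;> dsimp
    · rw [u_add]; ring
    · ring
  one_mul x := by
    show gmul gone x = x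
    unfold gmul gone
    refine Prod.ext ?_ ?_ <;> dsimp
    · rw [u_zero]; ring
    · ring
  mul_one x := by
    show gmul x gone = x
    unfold gmul gone
    refine Prod.ext ?_ ?_ <;> dsimp <;> ring
  inv_mul_cancel x := by
    show gmul (ginv x) x = gone
    unfold gmul ginv gone
    refine Prod.ext ?_ ?_ <;> dsimp <;> ring

/-- the generator `a` of order `p`. -/
def a (p : ℕ) : Gp p := ((0 : ZMod (p ^ 2)), (1 : ZMod p))

/-- the generator `b` of order `p^2`. -/
def b (p : ℕ) : Gp p := ((1 : ZMod (p ^ 2)), (0 : ZMod p))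

end Gp

/-! The automorphism is conjugation by `b⁻ᵐ`: the relation `a b a⁻¹ = b^{p+1}` gives
`a b^m a⁻¹ = b^{m(p+1)}`, i.e. `b⁻ᵐ a bᵐ = b^{mp} a`, and both automorphisms fix `b`.
Since `a` and `b` generate `G_p`, they agree. -/

theorem SemiconjBy.inv_pow_mul_mul_pow {G : Type*} [Group G] {x y : G} {k : ℕ}
    (h : SemiconjBy x y (y ^ (k + 1))) (n : ℕ) : (y ^ n)⁻¹ * x * y ^ n = y ^ (n * k) * x := by
  rw [mul_assoc, h.pow_right n, ← mul_assoc, ← pow_mul]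
  congr 1
  rw [inv_mul_eq_iff_eq_mul, ← pow_add]
  ring_nf

namespace Gp

def mk {p : ℕ} (x : ZMod (p ^ 2)) (y : ZMod p) : Gp p := (x, y)

variable {p : ℕ} [NeZero p]

theorem mk_mul_mk (x x' : ZMod (p ^ 2)) (y y' : ZMod p) :
    mk x y * mk x' y' = mk (x + u y * x') (y + y') := rfl

theorem one_eq_mk : (1 : Gp p) = mk 0 0 := rfl

theorem a_eq_mk : a p = mk 0 1 := rfl

theorem b_eq_mk : b p = mk 1 0 := rfl

theorem u_one : u (1 : ZMod p) = 1 + p := by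
  rw [u, ZMod.val_one_eq_one_mod, pmul_mod, Nat.cast_one, mul_one]

theorem b_pow (n : ℕ) : b p ^ n = mk n 0 := by
  induction n with
  | zero => rw [pow_zero, one_eq_mk, Nat.cast_zero]
  | succ k ih =>
    rw [pow_succ, ih, b_eq_mk, mk_mul_mk, u_zero, Nat.cast_succ, add_zero, one_mul]

theorem a_pow (n : ℕ) : a p ^ n = mk 0 n := by
  induction n with
  | zero => rw [pow_zero, one_eq_mk, Nat.cast_zero]
  | succ k ih =>
    rw [pow_succ, ih, a_eq_mk, mk_mul_mk, mul_zero, add_zero, Nat.cast_succ]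

theorem b_pow_val_mul_a_pow_val (x : ZMod (p ^ 2)) (y : ZMod p) :
    b p ^ x.val * a p ^ y.val = mk x y := by
  rw [b_pow, a_pow, mk_mul_mk, ZMod.natCast_zmod_val, ZMod.natCast_zmod_val, u_zero, mul_zero,
    add_zero, zero_add]

theorem hom_ext {M : Type*} [Monoid M] {f g : Gp p →* M} (ha : f (a p) = g (a p))
    (hb : f (b p) = g (b p)) : f = g := by
  ext ⟨x, y⟩
  change f (mk x y) = g (mk x y)
  rw [← b_pow_val_mul_a_pow_val, map_mul, map_mul, map_pow, map_pow, map_pow, map_pow, ha, hb]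

theorem semiconjBy_a_b : SemiconjBy (a p) (b p) (b p ^ (p + 1)) := by
  rw [SemiconjBy, b_pow, a_eq_mk, b_eq_mk, mk_mul_mk, mk_mul_mk, u_one, u_zero]
  push_cast
  ring_nf

end Gp

theorem gp_aut_inner_general (p : ℕ) [NeZero p]
    (m : ZMod p) (f : MulAut (Gp p))
    (hb : f (Gp.b p) = Gp.b p)
    (ha : f (Gp.a p) = Gp.b p ^ (m.val * p) * Gp.a p) :
    ∃ g : Gp p, f = MulAut.conj g := by
  refine ⟨(Gp.b p ^ m.val)⁻¹, MulEquiv.toMonoidHom_injective (Gp.hom_ext ?_ ?_)⟩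
  · simp only [MulEquiv.coe_toMonoidHom, MulAut.conj_apply, inv_inv, ha]
    exact (Gp.semiconjBy_a_b.inv_pow_mul_mul_pow _).symm
  · simp only [MulEquiv.coe_toMonoidHom, MulAut.conj_apply, inv_inv, hb]
    group

/-- For an odd prime `p`, the automorphisms of `G_p` of the form `b ↦ b`,
`a ↦ b^{mp} a` (with `m ∈ Z/p`) are inner automorphisms. -/
theorem gp_aut_inner (p : ℕ) (hp : p.Prime) (hodd : Odd p) [NeZero p]
    (m : ZMod p) (f : MulAut (Gp p))
    (hb : f (Gp.b p) = Gp.b p)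
    (ha : f (Gp.a p) = Gp.b p ^ (m.val * p) * Gp.a p) :
    ∃ g : Gp p, f = MulAut.conj g :=
  gp_aut_inner_general p m f hb ha
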